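/- Let α ∈ ℝ with 0 < |α| < 1/2, and let r, r', t > 0. Then lim_{t → ∞} t^{|α|} · ∑_{m ∈ ℤ, m ≠ 0} I_{|m+α|}( r r' / (2 i t) ) e^{i m (θ − θ')} = 0, for any fixed r, r' > 0 and angles θ, θ'. -/

import Mathlib

/-!
For `ν ≥ 0` and `‖z / 2‖ ≤ 1` the power series gives `‖I_ν(z)‖ ≤ 6 ‖z / 2‖ ^ ν`, because
`Γ(ν + k + 1) ≥ Γ(ν + 1) ≥ 1 / 2`. For `m ≠ 0` the order `|m + α|` is at least
`(1 - |α|) + (|m| - 1)`, so once `‖z / 2‖ ≤ 1 / 2` the whole series is bounded by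
`‖z / 2‖ ^ (1 - |α|)` times a geometric series in `2 ^ (-|m|)`. With `z = c / t` this makes the
product `O(t ^ (2 |α| - 1))`, which tends to zero since `|α| < 1 / 2`.
-/

open Real Filter

/-- The modified Bessel function of the first kind, defined by its power series. -/
noncomputable def besselI (ν : ℝ) (z : ℂ) : ℂ :=
  ∑' k : ℕ, (z / 2) ^ ((ν : ℂ) + 2 * k) /
    ((k.factorial : ℂ) * (Real.Gamma (ν + k + 1) : ℂ))

open Topology

lemma Real.half_le_Gamma {s : ℝ} (hs : 1 ≤ s) : 1 / 2 ≤ Gamma s := by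
  have h_mono {x : ℝ} (hx : 2 ≤ x) : 1 ≤ Gamma x :=
    Gamma_two ▸ Gamma_strictMonoOn_Ici.monotoneOn (le_refl (2 : ℝ)) hx hx
  rcases le_or_gt 2 s with h | h
  · linarith [h_mono h]
  · have h_one_le := h_mono (show 2 ≤ s + 1 by linarith)
    rw [Gamma_add_one (by positivity)] at h_one_le
    nlinarith [Gamma_pos_of_pos (show 0 < s by linarith)]

lemma Real.Gamma_add_one_le_Gamma_add_nat_add_one {ν : ℝ} (hν : 0 ≤ ν) (k : ℕ) :
    Gamma (ν + 1) ≤ Gamma (ν + k + 1) := by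
  induction k with
  | zero => simp
  | succ k ih =>
    rw [Nat.cast_succ, ← add_assoc, Gamma_add_one (by positivity : ν + k + 1 ≠ 0)]
    nlinarith [Gamma_pos_of_pos (show 0 < ν + k + 1 by positivity)]

lemma norm_besselI_le {ν : ℝ} (hν : 0 ≤ ν) (z : ℂ) :
    ‖besselI ν z‖ ≤ ‖z / 2‖ ^ ν / Gamma (ν + 1) * exp (‖z / 2‖ ^ 2) := by
  set w := ‖z / 2‖
  have h_exp : HasSum (fun k : ℕ => w ^ ν / Gamma (ν + 1) * ((w ^ 2) ^ k / k.factorial))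
      (w ^ ν / Gamma (ν + 1) * exp (w ^ 2)) := by
    refine HasSum.mul_left _ ?_
    simpa [exp_eq_exp_ℝ, NormedSpace.exp_eq_tsum_div] using
      (summable_pow_div_factorial (w ^ 2)).hasSum
  refine tsum_of_norm_bounded h_exp fun k => ?_
  have h_num : ‖(z / 2) ^ ((ν : ℂ) + 2 * k)‖ ≤ w ^ ν * (w ^ 2) ^ k := by
    calc ‖(z / 2) ^ ((ν : ℂ) + 2 * k)‖ ≤ w ^ (ν + 2 * k) := by
          simpa [w] using Complex.norm_cpow_le (z / 2) ((ν : ℂ) + 2 * k)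
      _ = w ^ ν * (w ^ 2) ^ k := by
          rw [rpow_add_of_nonneg (norm_nonneg _) hν (by positivity), rpow_mul (norm_nonneg _),
            rpow_two, rpow_natCast]
  rw [norm_div, norm_mul, Complex.norm_natCast, Complex.norm_real,
    norm_of_nonneg (Gamma_pos_of_pos (by positivity)).le]
  calc ‖(z / 2) ^ ((ν : ℂ) + 2 * k)‖ / (k.factorial * Gamma (ν + k + 1))
      ≤ w ^ ν * (w ^ 2) ^ k / (k.factorial * Gamma (ν + 1)) := by
        gcongr
        exact Gamma_add_one_le_Gamma_add_nat_add_one hν k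
    _ = w ^ ν / Gamma (ν + 1) * ((w ^ 2) ^ k / k.factorial) := by ring

lemma norm_besselI_le_six_mul {ν : ℝ} (hν : 0 ≤ ν) {z : ℂ} (hz : ‖z / 2‖ ≤ 1) :
    ‖besselI ν z‖ ≤ 6 * ‖z / 2‖ ^ ν := by
  have hΓ := half_le_Gamma (show 1 ≤ ν + 1 by linarith)
  have h_exp : exp (‖z / 2‖ ^ 2) ≤ 3 := by
    have : ‖z / 2‖ ^ 2 ≤ 1 := pow_le_one₀ (norm_nonneg _) hz
    linarith [exp_le_exp.2 this, exp_one_lt_d9]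
  calc ‖besselI ν z‖ ≤ ‖z / 2‖ ^ ν / Gamma (ν + 1) * exp (‖z / 2‖ ^ 2) := norm_besselI_le hν z
    _ ≤ ‖z / 2‖ ^ ν / (1 / 2) * 3 := by gcongr
    _ = 6 * ‖z / 2‖ ^ ν := by ring

lemma rpow_abs_int_add_le {w : ℝ} (hw₀ : 0 ≤ w) (hw : w ≤ 1 / 2) {α : ℝ} (hα : |α| ≤ 1)
    {m : ℤ} (hm : m ≠ 0) :
    w ^ |(m : ℝ) + α| ≤ w ^ (1 - |α|) * (2 * (1 / 2) ^ m.natAbs) := by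
  obtain ⟨n, hn⟩ : ∃ n : ℕ, m.natAbs = n + 1 := Nat.exists_eq_succ_of_ne_zero (by simpa)
  have h_exponent : (1 - |α|) + n ≤ |(m : ℝ) + α| := by
    have h_abs : |(m : ℝ)| = n + 1 := by
      rw [← Int.cast_abs, Int.abs_eq_natAbs, hn]; push_cast; ring
    have h_tri := abs_sub_abs_le_abs_sub (m : ℝ) (-α)
    rw [abs_neg, sub_neg_eq_add] at h_tri
    linarith
  calc w ^ |(m : ℝ) + α| ≤ w ^ ((1 - |α|) + n) :=
        rpow_le_rpow_of_exponent_ge' hw₀ (by linarith) (by linarith) h_exponent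
    _ = w ^ (1 - |α|) * w ^ n := by
        rw [rpow_add_of_nonneg hw₀ (by linarith) n.cast_nonneg, rpow_natCast]
    _ ≤ w ^ (1 - |α|) * (1 / 2) ^ n := by gcongr
    _ = w ^ (1 - |α|) * (2 * (1 / 2) ^ m.natAbs) := by rw [hn, pow_succ]; ring

lemma summable_half_pow_natAbs : Summable fun m : ℤ => (1 / 2 : ℝ) ^ m.natAbs :=
  .of_nat_of_neg (by simpa using summable_geometric_two) (by simpa using summable_geometric_two)

lemma norm_tsum_besselI_mul_le {α : ℝ} (hα : |α| < 1 / 2) {z : ℂ} (hz : ‖z / 2‖ ≤ 1 / 2)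
    {e : ℤ → ℂ} (he : ∀ m, ‖e m‖ ≤ 1) :
    ‖∑' m : {m : ℤ // m ≠ 0}, besselI |((m : ℤ) : ℝ) + α| z * e m‖ ≤
      ‖z / 2‖ ^ (1 - |α|) * ∑' m : {m : ℤ // m ≠ 0}, 12 * (1 / 2 : ℝ) ^ (m : ℤ).natAbs := by
  refine tsum_of_norm_bounded
    (((summable_half_pow_natAbs.subtype _).mul_left 12).hasSum.mul_left _) fun m => ?_
  calc ‖besselI |((m : ℤ) : ℝ) + α| z * e m‖ ≤ ‖besselI |((m : ℤ) : ℝ) + α| z‖ := by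
        rw [norm_mul]
        exact mul_le_of_le_one_right (norm_nonneg _) (he m)
    _ ≤ 6 * ‖z / 2‖ ^ |((m : ℤ) : ℝ) + α| :=
        norm_besselI_le_six_mul (abs_nonneg _) (by linarith)
    _ ≤ 6 * (‖z / 2‖ ^ (1 - |α|) * (2 * (1 / 2) ^ (m : ℤ).natAbs)) := by
        gcongr
        exact rpow_abs_int_add_le (norm_nonneg _) hz (by linarith) m.2
    _ = ‖z / 2‖ ^ (1 - |α|) * (12 * (1 / 2) ^ (m : ℤ).natAbs) := by ring

theorem tendsto_rpow_mul_tsum_besselI_div {α : ℝ} (hα : |α| < 1 / 2) (c : ℂ)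
    {e : ℤ → ℂ} (he : ∀ m, ‖e m‖ ≤ 1) :
    Tendsto (fun t : ℝ => ((t ^ |α| : ℝ) : ℂ) *
      ∑' m : {m : ℤ // m ≠ 0}, besselI |((m : ℤ) : ℝ) + α| (c / t) * e m) atTop (𝓝 0) := by
  set S := ∑' m : {m : ℤ // m ≠ 0}, 12 * (1 / 2 : ℝ) ^ (m : ℤ).natAbs
  set a := ‖c / 2‖
  refine squeeze_zero_norm' (a := fun t => a ^ (1 - |α|) * S * t ^ (-(1 - 2 * |α|))) ?_ ?_
  · filter_upwards [eventually_ge_atTop (max 1 ‖c‖)] with t ht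
    have ht₀ : 0 < t := one_pos.trans_le (le_of_max_le_left ht)
    have h_norm : ‖c / t / 2‖ = a / t := by
      rw [div_right_comm, norm_div, Complex.norm_real, norm_of_nonneg ht₀.le]
    have h_small : a / t ≤ 1 / 2 := by
      have ha : a = ‖c‖ / 2 := by simp [a]
      rw [div_le_iff₀ ht₀, ha]
      linarith [le_of_max_le_right ht]
    rw [norm_mul, Complex.norm_real, norm_of_nonneg (by positivity)]
    calc t ^ |α| * ‖∑' m : {m : ℤ // m ≠ 0}, besselI |((m : ℤ) : ℝ) + α| (c / t) * e m‖
        ≤ t ^ |α| * ((a / t) ^ (1 - |α|) * S) := by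
          gcongr
          have h := norm_tsum_besselI_mul_le hα (h_norm ▸ h_small) he
          rwa [h_norm] at h
      _ = a ^ (1 - |α|) * S * t ^ (|α| - (1 - |α|)) := by
          rw [div_rpow (norm_nonneg _) ht₀.le, rpow_sub ht₀ |α| (1 - |α|)]; ring
      _ = a ^ (1 - |α|) * S * t ^ (-(1 - 2 * |α|)) := by ring_nf
  · simpa using (tendsto_rpow_neg_atTop (by linarith : 0 < 1 - 2 * |α|)).const_mul
      (a ^ (1 - |α|) * S)

theorem stmt_8_general (α : ℝ) (hα' : |α| < 1/2)
    (r r' θ θ' : ℝ) :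
    Tendsto (fun t : ℝ =>
        ((t ^ |α| : ℝ) : ℂ) *
          ∑' m : {m : ℤ // m ≠ 0},
            besselI |((m : ℤ) : ℝ) + α| ((r * r' : ℂ) / (2 * Complex.I * (t : ℂ))) *
              Complex.exp (Complex.I * ((m : ℤ) : ℂ) * ((θ : ℂ) - (θ' : ℂ))))
      atTop (nhds 0) := by
  have h_arg (t : ℝ) :
      (r * r' : ℂ) / (2 * Complex.I * (t : ℂ)) = r * r' / (2 * Complex.I) / t :=
    (div_div _ _ _).symm
  have h_phase (m : ℤ) : ‖Complex.exp (Complex.I * (m : ℂ) * ((θ : ℂ) - (θ' : ℂ)))‖ ≤ 1 := by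
    simp [Complex.norm_exp]
  simpa only [h_arg] using tendsto_rpow_mul_tsum_besselI_div hα' (r * r' / (2 * Complex.I)) h_phase

theorem stmt_8 (α : ℝ) (hα : 0 < |α|) (hα' : |α| < 1/2)
    (r r' θ θ' : ℝ) (hr : 0 < r) (hr' : 0 < r') :
    Tendsto (fun t : ℝ =>
        ((t ^ |α| : ℝ) : ℂ) *
          ∑' m : {m : ℤ // m ≠ 0},
            besselI |((m : ℤ) : ℝ) + α| ((r * r' : ℂ) / (2 * Complex.I * (t : ℂ))) *
              Complex.exp (Complex.I * ((m : ℤ) : ℂ) * ((θ : ℂ) - (θ' : ℂ))))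
      atTop (nhds 0) :=
  stmt_8_general α hα' r r' θ θ'
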